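/- Let ν̃ ∈ C¹_b(ℝⁿ;ℝⁿ) and for r ∈ ℝ define f_r(x) = f(x + rν̃(x)). If |r|·‖ν̃‖_{C¹_b} ≤ 1 − C for some C ∈ (0,1), then for all f ∈ H¹(ℝⁿ): ‖f − f_r‖²_{L²(ℝⁿ)} ≤ (|r|²‖ν̃‖²_{L^∞}/Cⁿ)·‖∇f‖²_{L²(ℝⁿ)}. -/

import Mathlib

open MeasureTheory Filter Topology Complex
open scoped ENNReal FourierTransform
open Metric
open scoped NNReal

noncomputable section

/-- Euclidean space `ℝⁿ`. -/
abbrev Evec (n : ℕ) := EuclideanSpace ℝ (Fin n)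

/-- The magnetic gradient `(i∇ + A) f`, the gradient being taken via `fderiv`. -/
def magGrad {n : ℕ} (A : Evec n → Evec n) (f : Evec n → ℂ) (x : Evec n) :
    EuclideanSpace ℂ (Fin n) :=
  WithLp.toLp 2 (fun j => Complex.I * fderiv ℝ f x (EuclideanSpace.single j 1) + ((A x j : ℝ) : ℂ) * f x)

/-- Squared `L²(ℝⁿ)`-norm. -/
def L2sq {n : ℕ} (f : Evec n → ℂ) : ℝ := ∫ x, ‖f x‖ ^ 2

/-- The squared norm of the magnetic Sobolev space `𝓗_{A,Q}`:
`∫ (|(i∇+A)f|² + (Q₁+1)|f|²)`. -/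
def HAQsq {n : ℕ} (A : Evec n → Evec n) (Q₁ : Evec n → ℝ) (f : Evec n → ℂ) : ℝ :=
  ∫ x, (‖magGrad A f x‖ ^ 2 + (Q₁ x + 1) * ‖f x‖ ^ 2)

/-- Membership in the magnetic Sobolev space `𝓗_{A,Q}`. -/
def MemHAQ {n : ℕ} (A : Evec n → Evec n) (Q₁ : Evec n → ℝ) (f : Evec n → ℂ) : Prop :=
  MemLp f 2 volume ∧ MemLp (magGrad A f) 2 volume ∧
    Integrable (fun x => Q₁ x * ‖f x‖ ^ 2) volume

/-- Squared `H¹(ℝⁿ)`-norm. -/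
def H1sq {n : ℕ} (f : Evec n → ℂ) : ℝ := ∫ x, (‖fderiv ℝ f x‖ ^ 2 + ‖f x‖ ^ 2)

/-- Membership in `H¹(ℝⁿ)`. -/
def MemH1 {n : ℕ} (f : Evec n → ℂ) : Prop :=
  Differentiable ℝ f ∧ MemLp f 2 volume ∧ MemLp (fun x => fderiv ℝ f x) 2 volume


lemma aux_det_le {n : ℕ} (φ : Evec n →ₗ[ℝ] Evec n) {K : ℝ} (hK : 0 ≤ K)
    (h : ∀ x, ‖φ x‖ ≤ K * ‖x‖) : |LinearMap.det φ| ≤ K ^ n := by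
  have hn : (volume : Measure (Evec n)) (closedBall 0 1) ≠ 0 :=
    (measure_closedBall_pos volume (0 : Evec n) one_pos).ne'
  have hfin : (volume : Measure (Evec n)) (closedBall 0 1) ≠ ⊤ :=
    measure_closedBall_lt_top.ne
  have himg : φ '' closedBall 0 1 ⊆ closedBall (0 : Evec n) K := by
    rintro - ⟨x, hx, rfl⟩
    simp only [mem_closedBall, dist_zero_right] at *
    calc ‖φ x‖ ≤ K * ‖x‖ := h x
    _ ≤ K * 1 := by nlinarith
    _ = K := mul_one K
  have h1 : ENNReal.ofReal |LinearMap.det φ| * volume (closedBall (0:Evec n) 1)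
      ≤ ENNReal.ofReal (K ^ n) * volume (closedBall (0:Evec n) 1) := by
    rw [← Measure.addHaar_image_linearMap]
    calc volume (φ '' closedBall 0 1) ≤ volume (closedBall (0 : Evec n) K) :=
          measure_mono himg
      _ = ENNReal.ofReal (K ^ n) * volume (closedBall (0:Evec n) 1) := by
          rw [Measure.addHaar_closedBall' volume _ hK, finrank_euclideanSpace_fin]
  have h2 := ENNReal.mul_le_mul_iff_left hn hfin |>.mp h1
  have := (ENNReal.ofReal_le_ofReal_iff (by positivity)).mp h2
  linarith [this]

lemma aux_det_ge {n : ℕ} (M : Evec n →L[ℝ] Evec n) {C : ℝ} (hC : 0 < C)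
    (h : ∀ x, C * ‖x‖ ≤ ‖M x‖) : C ^ n ≤ |M.det| := by
  have hinj : Function.Injective M.toLinearMap := by
    intro x y hxy
    have : C * ‖x - y‖ ≤ ‖M (x - y)‖ := h _
    rw [map_sub] at this
    simp only [ContinuousLinearMap.coe_coe] at hxy
    rw [hxy, sub_self, norm_zero] at this
    have : ‖x - y‖ ≤ 0 := by nlinarith [norm_nonneg (x - y)]
    have := le_antisymm this (norm_nonneg _)
    rwa [norm_sub_eq_zero_iff] at this
  set e := LinearEquiv.ofInjectiveEndo M.toLinearMap hinj with he
  have hsymm : ∀ y, ‖(e.symm : Evec n →ₗ[ℝ] Evec n) y‖ ≤ C⁻¹ * ‖y‖ := by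
    intro y
    have h1 : M (e.symm y) = y := by
      have := e.apply_symm_apply y
      rwa [he, LinearEquiv.coe_ofInjectiveEndo] at this
    have h2 := h (e.symm y)
    rw [h1] at h2
    rw [le_inv_mul_iff₀ hC]
    simpa using h2
  have hdetle : |LinearMap.det (e.symm : Evec n →ₗ[ℝ] Evec n)| ≤ (C⁻¹) ^ n :=
    aux_det_le _ (by positivity) hsymm
  have hmul := e.det_mul_det_symm
  have hedet : LinearMap.det (e : Evec n →ₗ[ℝ] Evec n) = M.det := by
    rw [he]; congr 1
  have habs : |M.det| * |LinearMap.det (e.symm : Evec n →ₗ[ℝ] Evec n)| = 1 := by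
    rw [← abs_mul, ← hedet, hmul, abs_one]
  have hpos : (0:ℝ) < |LinearMap.det (e.symm : Evec n →ₗ[ℝ] Evec n)| := by
    rcases eq_or_lt_of_le (abs_nonneg (LinearMap.det (e.symm : Evec n →ₗ[ℝ] Evec n))) with h0 | h0
    · rw [← h0, mul_zero] at habs; norm_num at habs
    · exact h0
  have : |M.det| = (|LinearMap.det (e.symm : Evec n →ₗ[ℝ] Evec n)|)⁻¹ :=
    eq_inv_of_mul_eq_one_left habs
  rw [this]
  calc C ^ n = ((C⁻¹) ^ n)⁻¹ := by rw [← inv_pow, inv_inv]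
    _ ≤ |LinearMap.det (e.symm : Evec n →ₗ[ℝ] Evec n)|⁻¹ :=
        inv_anti₀ hpos hdetle

lemma aux_cov {n : ℕ} (ν' : Evec n → Evec n) (hν : ContDiff ℝ 1 ν') {Kb C : ℝ}
    (hb : ∀ x, ‖fderiv ℝ ν' x‖ ≤ Kb) {c : ℝ} (hc : |c| * Kb ≤ 1 - C) (hC0 : 0 < C)
    (g : Evec n → ℝ≥0∞) :
    ENNReal.ofReal (C ^ n) * ∫⁻ x, g (x + c • ν' x) ≤ ∫⁻ y, g y := by
  set T : Evec n → Evec n := fun x => x + c • ν' x with hT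
  set T' : Evec n → Evec n →L[ℝ] Evec n :=
    fun x => ContinuousLinearMap.id ℝ (Evec n) + c • fderiv ℝ ν' x with hT'def
  have hdiff := hν.differentiable one_ne_zero
  have hT' : ∀ x, HasFDerivAt T (T' x) x := fun x =>
    (hasFDerivAt_id x).add (((hdiff x).hasFDerivAt).const_smul c)
  -- Lipschitz bound for c • ν'
  have hlip : ∀ x y : Evec n, ‖ν' x - ν' y‖ ≤ Kb * ‖x - y‖ := fun x y =>
    Convex.norm_image_sub_le_of_norm_fderiv_le (fun z _ => hdiff z)
      (fun z _ => hb z) convex_univ (Set.mem_univ y) (Set.mem_univ x)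
  -- Injectivity
  have hinj : Function.Injective T := by
    intro x y hxy
    have hxy' : x + c • ν' x = y + c • ν' y := hxy
    have h1 : x - y = c • (ν' y - ν' x) := by
      rw [smul_sub, sub_eq_sub_iff_add_eq_add, hxy', add_comm]
    have h2 : ‖x - y‖ ≤ (1 - C) * ‖x - y‖ := by
      calc ‖x - y‖ = ‖c • (ν' y - ν' x)‖ := by rw [h1]
        _ = |c| * ‖ν' y - ν' x‖ := by rw [norm_smul, Real.norm_eq_abs]
        _ ≤ |c| * (Kb * ‖y - x‖) :=
            mul_le_mul_of_nonneg_left (hlip y x) (abs_nonneg c)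
        _ = |c| * Kb * ‖x - y‖ := by rw [← mul_assoc, norm_sub_rev]
        _ ≤ (1 - C) * ‖x - y‖ :=
            mul_le_mul_of_nonneg_right hc (norm_nonneg _)
    have : C * ‖x - y‖ ≤ 0 := by nlinarith
    have hxy0 : ‖x - y‖ = 0 := le_antisymm (by nlinarith [norm_nonneg (x-y)]) (norm_nonneg _)
    rwa [norm_sub_eq_zero_iff] at hxy0
  -- determinant lower bound
  have hdet : ∀ x, C ^ n ≤ |(T' x).det| := by
    intro x
    apply aux_det_ge _ hC0
    intro v
    have h1 : ‖(c • fderiv ℝ ν' x) v‖ ≤ (1 - C) * ‖v‖ := by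
      rw [ContinuousLinearMap.smul_apply, norm_smul, Real.norm_eq_abs]
      calc |c| * ‖fderiv ℝ ν' x v‖ ≤ |c| * (Kb * ‖v‖) :=
            mul_le_mul_of_nonneg_left
              ((fderiv ℝ ν' x).le_of_opNorm_le (hb x) v) (abs_nonneg c)
        _ = |c| * Kb * ‖v‖ := by ring
        _ ≤ (1 - C) * ‖v‖ := mul_le_mul_of_nonneg_right hc (norm_nonneg _)
    have h2 : ‖T' x v‖ ≥ ‖v‖ - ‖(c • fderiv ℝ ν' x) v‖ := by
      rw [hT'def]
      calc ‖(ContinuousLinearMap.id ℝ (Evec n) + c • fderiv ℝ ν' x) v‖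
          = ‖v + (c • fderiv ℝ ν' x) v‖ := by
            rw [ContinuousLinearMap.add_apply, ContinuousLinearMap.id_apply]
        _ ≥ ‖v‖ - ‖(c • fderiv ℝ ν' x) v‖ := by
            have h3 := norm_sub_le (v + (c • fderiv ℝ ν' x) v) ((c • fderiv ℝ ν' x) v)
            rw [add_sub_cancel_right] at h3
            linarith
    nlinarith [norm_nonneg v, norm_nonneg (T' x v)]
  -- change of variables
  have hcov := lintegral_image_eq_lintegral_abs_det_fderiv_mul (volume : Measure (Evec n))
    MeasurableSet.univ (fun x _ => (hT' x).hasFDerivWithinAt) hinj.injOn g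
  rw [Measure.restrict_univ] at hcov
  calc ENNReal.ofReal (C ^ n) * ∫⁻ x, g (T x)
      = ∫⁻ x, ENNReal.ofReal (C ^ n) * g (T x) := (lintegral_const_mul' _ _ ENNReal.ofReal_ne_top).symm
    _ ≤ ∫⁻ x, ENNReal.ofReal |(T' x).det| * g (T x) := by
        apply lintegral_mono
        intro x
        exact mul_le_mul_left (ENNReal.ofReal_le_ofReal (hdet x)) _
    _ = ∫⁻ y in T '' Set.univ, g y := hcov.symm
    _ ≤ ∫⁻ y, g y := setLIntegral_le_lintegral _ _

lemma ennreal_le_sq_add_one (a : ℝ≥0∞) : a ≤ a ^ 2 + 1 := by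
  rcases le_total a 1 with h | h
  · exact h.trans (le_add_self)
  · calc a = a * 1 := (mul_one a).symm
      _ ≤ a * a := mul_le_mul_right h a
      _ ≤ a ^ 2 + 1 := by rw [← sq]; exact le_add_right le_rfl

lemma aux_ptwise {n : ℕ} (f : Evec n → ℂ) (hf : Differentiable ℝ f) (x v : Evec n)
    (hfin : (∫⁻ s in Set.Ioc (0:ℝ) 1, (‖fderiv ℝ f (x + s • v)‖₊ : ℝ≥0∞) ^ 2) ≠ ⊤) :
    (‖f x - f (x + v)‖₊ : ℝ≥0∞) ^ 2 ≤
      (ENNReal.ofReal ‖v‖) ^ 2 *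
        ∫⁻ s in Set.Ioc (0:ℝ) 1, (‖fderiv ℝ f (x + s • v)‖₊ : ℝ≥0∞) ^ 2 := by
  set μ : Measure ℝ := volume.restrict (Set.Ioc (0:ℝ) 1) with hμ
  set D : ℝ → ℂ := fun s => fderiv ℝ f (x + s • v) v with hD
  set h : ℝ → ℝ := fun s => ‖fderiv ℝ f (x + s • v)‖ with hh
  have hline : ∀ t : ℝ, HasDerivAt (fun s : ℝ => x + s • v) v t := by
    intro t
    simpa using ((hasDerivAt_id t).smul_const v).const_add x
  have hderiv : ∀ t : ℝ, HasDerivAt (fun s : ℝ => f (x + s • v)) (D t) t := fun t =>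
    ((hf (x + t • v)).hasFDerivAt).comp_hasDerivAt t (hline t)
  have hmeas_fd : Measurable (fun s : ℝ => fderiv ℝ f (x + s • v)) :=
    (measurable_fderiv ℝ f).comp (continuous_const.add (continuous_id.smul continuous_const)).measurable
  have hmeas_h : Measurable h := hmeas_fd.norm
  have hmeas_D : Measurable D := by
    exact (ContinuousLinearMap.apply ℝ ℂ v).continuous.measurable.comp hmeas_fd
  -- h is integrable on Ioc 0 1
  have hInth : Integrable h μ := by
    refine ⟨hmeas_h.aestronglyMeasurable, ?_⟩
    show (∫⁻ s, (‖h s‖₊ : ℝ≥0∞) ∂μ) < ⊤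
    calc ∫⁻ s, (‖h s‖₊ : ℝ≥0∞) ∂μ
        ≤ ∫⁻ s, ((‖fderiv ℝ f (x + s • v)‖₊ : ℝ≥0∞) ^ 2 + 1) ∂μ := by
          apply lintegral_mono
          intro s
          simpa [hh, nnnorm_norm] using
            ennreal_le_sq_add_one (‖fderiv ℝ f (x + s • v)‖₊ : ℝ≥0∞)
      _ = (∫⁻ s, (‖fderiv ℝ f (x + s • v)‖₊ : ℝ≥0∞) ^ 2 ∂μ) + μ Set.univ := by
          rw [lintegral_add_right _ measurable_const, lintegral_one]
      _ < ⊤ := by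
          rw [hμ, Measure.restrict_apply MeasurableSet.univ, Set.univ_inter, Real.volume_Ioc]
          exact ENNReal.add_lt_top.mpr ⟨hfin.lt_top, by simp⟩
  have hIntD : Integrable D μ := by
    apply Integrable.mono (hInth.const_mul ‖v‖) hmeas_D.aestronglyMeasurable
    filter_upwards with s
    rw [hD]
    calc ‖fderiv ℝ f (x + s • v) v‖ ≤ ‖fderiv ℝ f (x + s • v)‖ * ‖v‖ :=
        (fderiv ℝ f (x + s • v)).le_opNorm v
      _ = ‖v‖ * h s := by rw [hh]; ring
      _ ≤ ‖‖v‖ * h s‖ := le_abs_self _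
  have hIID : IntervalIntegrable D volume 0 1 :=
    (intervalIntegrable_iff_integrableOn_Ioc_of_le zero_le_one).mpr hIntD
  have hIIh : IntervalIntegrable h volume 0 1 :=
    (intervalIntegrable_iff_integrableOn_Ioc_of_le zero_le_one).mpr hInth
  have hFTC : ∫ t in (0:ℝ)..1, D t = f (x + v) - f x := by
    rw [intervalIntegral.integral_eq_sub_of_hasDerivAt (fun t _ => hderiv t) hIID]
    simp
  -- real bound
  have hreal : ‖f x - f (x + v)‖ ≤ ‖v‖ * ∫ s, h s ∂μ := by
    have h1 : ‖f x - f (x + v)‖ = ‖∫ t in (0:ℝ)..1, D t‖ := by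
      rw [hFTC, norm_sub_rev]
    rw [h1]
    calc ‖∫ t in (0:ℝ)..1, D t‖ ≤ ∫ t in (0:ℝ)..1, ‖D t‖ :=
        intervalIntegral.norm_integral_le_integral_norm zero_le_one
      _ ≤ ∫ t in (0:ℝ)..1, ‖v‖ * h t := by
          apply intervalIntegral.integral_mono_on zero_le_one hIID.norm
            (hIIh.const_mul ‖v‖)
          intro s _
          calc ‖D s‖ ≤ ‖fderiv ℝ f (x + s • v)‖ * ‖v‖ :=
              (fderiv ℝ f (x + s • v)).le_opNorm v
            _ = ‖v‖ * h s := by rw [hh]; ring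
      _ = ‖v‖ * ∫ t in (0:ℝ)..1, h t := intervalIntegral.integral_const_mul _ _
      _ = ‖v‖ * ∫ s, h s ∂μ := by
          rw [intervalIntegral.integral_of_le zero_le_one]
  -- pass to ℝ≥0∞
  have hJ : ENNReal.ofReal (∫ s, h s ∂μ) = ∫⁻ s, (‖fderiv ℝ f (x + s • v)‖₊ : ℝ≥0∞) ∂μ := by
    rw [ofReal_integral_eq_lintegral_ofReal hInth
      (Filter.Eventually.of_forall fun s => norm_nonneg _)]
    apply lintegral_congr
    intro s
    rw [hh]
    exact ofReal_norm _
  have hnn : (‖f x - f (x + v)‖₊ : ℝ≥0∞) ≤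
      ENNReal.ofReal ‖v‖ * ∫⁻ s, (‖fderiv ℝ f (x + s • v)‖₊ : ℝ≥0∞) ∂μ := by
    rw [← hJ, ← ENNReal.ofReal_mul (norm_nonneg v), ← enorm_eq_nnnorm, ← ofReal_norm]
    exact ENNReal.ofReal_le_ofReal hreal
  -- Cauchy–Schwarz on the probability measure μ
  have hCS : (∫⁻ s, (‖fderiv ℝ f (x + s • v)‖₊ : ℝ≥0∞) ∂μ) ^ 2 ≤
      ∫⁻ s, (‖fderiv ℝ f (x + s • v)‖₊ : ℝ≥0∞) ^ 2 ∂μ := by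
    have h22 : Real.HolderConjugate 2 2 := Real.HolderConjugate.two_two
    have hg1 : AEMeasurable (fun _ : ℝ => (1 : ℝ≥0∞)) μ := aemeasurable_const
    have hfa : AEMeasurable (fun s => (‖fderiv ℝ f (x + s • v)‖₊ : ℝ≥0∞)) μ :=
      (hmeas_fd.nnnorm.coe_nnreal_ennreal).aemeasurable
    have key := ENNReal.lintegral_mul_le_Lp_mul_Lq μ h22 hfa hg1
    simp only [Pi.mul_apply, mul_one, ENNReal.one_rpow, lintegral_one] at key
    rw [hμ, Measure.restrict_apply MeasurableSet.univ, Set.univ_inter, Real.volume_Ioc] at key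
    norm_num at key
    calc (∫⁻ s, (‖fderiv ℝ f (x + s • v)‖₊ : ℝ≥0∞) ∂μ) ^ 2
        ≤ ((∫⁻ s, (‖fderiv ℝ f (x + s • v)‖₊ : ℝ≥0∞) ^ (2:ℕ) ∂μ) ^ (1/2 : ℝ)) ^ (2:ℕ) :=
          pow_le_pow_left' key 2
      _ = ∫⁻ s, (‖fderiv ℝ f (x + s • v)‖₊ : ℝ≥0∞) ^ 2 ∂μ := by
          rw [← ENNReal.rpow_natCast _ 2, ← ENNReal.rpow_mul]
          norm_num
  calc (‖f x - f (x + v)‖₊ : ℝ≥0∞) ^ 2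
      ≤ (ENNReal.ofReal ‖v‖ * ∫⁻ s, (‖fderiv ℝ f (x + s • v)‖₊ : ℝ≥0∞) ∂μ) ^ 2 :=
        pow_le_pow_left' hnn 2
    _ = (ENNReal.ofReal ‖v‖) ^ 2 * (∫⁻ s, (‖fderiv ℝ f (x + s • v)‖₊ : ℝ≥0∞) ∂μ) ^ 2 := by
        rw [mul_pow]
    _ ≤ (ENNReal.ofReal ‖v‖) ^ 2 * ∫⁻ s, (‖fderiv ℝ f (x + s • v)‖₊ : ℝ≥0∞) ^ 2 ∂μ :=
        mul_le_mul_right hCS _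

lemma aux_sq_lintegral_ne_top {α E : Type*} [MeasurableSpace α] {μ : Measure α}
    [NormedAddCommGroup E] {g : α → E} (hg : MemLp g 2 μ) :
    (∫⁻ x, (‖g x‖₊ : ℝ≥0∞) ^ 2 ∂μ) ≠ ⊤ := by
  have h := hg.2
  rw [eLpNorm_eq_lintegral_rpow_enorm_toReal two_ne_zero ENNReal.ofNat_ne_top] at h
  simp only [enorm_eq_nnnorm] at h
  have h2 : ((2:ℝ≥0∞)).toReal = (2:ℝ) := by norm_num
  rw [h2] at h
  have hlt := (ENNReal.rpow_lt_top_iff_of_pos (by norm_num : (0:ℝ) < 1/2)).mp h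
  have heq : (∫⁻ x, (‖g x‖₊ : ℝ≥0∞) ^ (2:ℝ) ∂μ) = ∫⁻ x, (‖g x‖₊ : ℝ≥0∞) ^ 2 ∂μ := by
    apply lintegral_congr
    intro x
    rw [← ENNReal.rpow_natCast _ 2]
    norm_num
  rw [heq] at hlt
  exact hlt.ne

theorem stmt7' {n : ℕ} (hn : 2 ≤ n) (ν' : Evec n → Evec n) (hν : ContDiff ℝ 1 ν')
    (Kinf Kb C r : ℝ)
    (hinf : ∀ x, ‖ν' x‖ ≤ Kinf)
    (hb : ∀ x, ‖ν' x‖ ≤ Kb ∧ ‖fderiv ℝ ν' x‖ ≤ Kb)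
    (hC : C ∈ Set.Ioo (0 : ℝ) 1) (hr : |r| * Kb ≤ 1 - C)
    (f : Evec n → ℂ) (hf : Differentiable ℝ f ∧ MemLp f 2 volume ∧
      MemLp (fun x => fderiv ℝ f x) 2 volume) :
    ∫ x, ‖f x - f (x + r • ν' x)‖ ^ 2 ≤
      (|r| ^ 2 * Kinf ^ 2 / C ^ n) * ∫ x, ‖fderiv ℝ f x‖ ^ 2 := by
  obtain ⟨hC0, hC1⟩ := hC
  obtain ⟨hdiff, hL2, hDL2⟩ := hf
  have hKb0 : 0 ≤ Kb := le_trans (norm_nonneg (ν' 0)) (hb 0).1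
  have hKinf0 : 0 ≤ Kinf := le_trans (norm_nonneg (ν' 0)) (hinf 0)
  set G : Evec n → ℝ≥0∞ := fun y => (‖fderiv ℝ f y‖₊ : ℝ≥0∞) ^ 2 with hG
  set M : ℝ≥0∞ := ∫⁻ y, G y with hM
  have hMfin : M ≠ ⊤ := aux_sq_lintegral_ne_top hDL2
  have hGmeas : Measurable G := by
    exact ((measurable_fderiv ℝ f).nnnorm.coe_nnreal_ennreal).pow_const 2
  have hCn0 : ENNReal.ofReal (C ^ n) ≠ 0 :=
    (ENNReal.ofReal_pos.mpr (pow_pos hC0 n)).ne'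
  -- Step A: change of variables for each s ∈ Ioc 0 1
  have hA : ∀ s ∈ Set.Ioc (0:ℝ) 1,
      (∫⁻ x, G (x + (s * r) • ν' x)) ≤ (ENNReal.ofReal (C ^ n))⁻¹ * M := by
    intro s hs
    have habs : |s * r| * Kb ≤ 1 - C := by
      rw [abs_mul]
      have hs1 : |s| ≤ 1 := abs_le.mpr ⟨by linarith [hs.1], hs.2⟩
      have : |s| * |r| ≤ |r| := by nlinarith [abs_nonneg r]
      nlinarith [abs_nonneg r, abs_nonneg (s*r), mul_le_mul_of_nonneg_right this hKb0]
    have hcov := aux_cov ν' hν (fun x => (hb x).2) habs hC0 G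
    calc (∫⁻ x, G (x + (s * r) • ν' x))
        = (ENNReal.ofReal (C ^ n))⁻¹ *
            (ENNReal.ofReal (C ^ n) * ∫⁻ x, G (x + (s * r) • ν' x)) := by
          rw [← mul_assoc, ENNReal.inv_mul_cancel hCn0 ENNReal.ofReal_ne_top, one_mul]
      _ ≤ (ENNReal.ofReal (C ^ n))⁻¹ * M := mul_le_mul_right hcov _
  set ν : Measure ℝ := volume.restrict (Set.Ioc (0:ℝ) 1) with hν2
  have hν1 : ν Set.univ = 1 := by
    rw [hν2, Measure.restrict_apply MeasurableSet.univ, Set.univ_inter, Real.volume_Ioc]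
    norm_num
  -- joint measurability
  have hcont2 : Continuous (fun p : Evec n × ℝ => p.1 + (p.2 * r) • ν' p.1) :=
    continuous_fst.add ((continuous_snd.mul continuous_const).smul
      ((hν.continuous).comp continuous_fst))
  have hjoint : Measurable (Function.uncurry fun (x : Evec n) (s : ℝ) =>
      G (x + (s * r) • ν' x)) := hGmeas.comp hcont2.measurable
  set H : Evec n → ℝ≥0∞ := fun x => ∫⁻ s, G (x + (s * r) • ν' x) ∂ν with hH
  have hHmeas : Measurable H := Measurable.lintegral_prod_right' hjoint
  have hI : (∫⁻ x, H x) ≤ (ENNReal.ofReal (C ^ n))⁻¹ * M := by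
    rw [hH]
    rw [lintegral_lintegral_swap hjoint.aemeasurable]
    calc ∫⁻ s, (∫⁻ x, G (x + (s * r) • ν' x)) ∂ν
        ≤ ∫⁻ _, (ENNReal.ofReal (C ^ n))⁻¹ * M ∂ν := by
          rw [hν2]
          exact setLIntegral_mono measurable_const hA
      _ = (ENNReal.ofReal (C ^ n))⁻¹ * M := by
          rw [lintegral_const, hν1, mul_one]
  have hIfin : (∫⁻ x, H x) ≠ ⊤ := by
    refine ne_top_of_le_ne_top ?_ hI
    exact ENNReal.mul_ne_top (ENNReal.inv_ne_top.mpr hCn0) hMfin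
  have hae : ∀ᵐ x, H x < ⊤ := ae_lt_top hHmeas hIfin
  -- pointwise bound
  have hpt : ∀ᵐ x, (‖f x - f (x + r • ν' x)‖₊ : ℝ≥0∞) ^ 2 ≤
      (ENNReal.ofReal (|r| * Kinf)) ^ 2 * H x := by
    filter_upwards [hae] with x hx
    have hHx : H x = ∫⁻ s in Set.Ioc (0:ℝ) 1,
        (‖fderiv ℝ f (x + s • (r • ν' x))‖₊ : ℝ≥0∞) ^ 2 := by
      rw [hH]
      apply lintegral_congr
      intro s
      rw [hG, smul_smul]
    have hb2 := aux_ptwise f hdiff x (r • ν' x) (by rw [← hHx]; exact hx.ne)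
    refine le_trans hb2 ?_
    rw [← hHx]
    apply mul_le_mul' _ le_rfl
    have hv : ‖r • ν' x‖ ≤ |r| * Kinf := by
      rw [norm_smul, Real.norm_eq_abs]
      exact mul_le_mul_of_nonneg_left (hinf x) (abs_nonneg r)
    exact pow_le_pow_left' (ENNReal.ofReal_le_ofReal hv) 2
  -- integrate the pointwise bound
  have hL : (∫⁻ x, (‖f x - f (x + r • ν' x)‖₊ : ℝ≥0∞) ^ 2) ≤
      (ENNReal.ofReal (|r| * Kinf)) ^ 2 * ((ENNReal.ofReal (C ^ n))⁻¹ * M) := by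
    calc (∫⁻ x, (‖f x - f (x + r • ν' x)‖₊ : ℝ≥0∞) ^ 2)
        ≤ ∫⁻ x, (ENNReal.ofReal (|r| * Kinf)) ^ 2 * H x := lintegral_mono_ae hpt
      _ = (ENNReal.ofReal (|r| * Kinf)) ^ 2 * ∫⁻ x, H x := lintegral_const_mul' _ _
          (by exact ENNReal.pow_ne_top ENNReal.ofReal_ne_top)
      _ ≤ _ := mul_le_mul_right hI _
  -- convert both sides to real integrals
  have hcontdiffr : Continuous fun x => f x - f (x + r • ν' x) :=
    hdiff.continuous.sub (hdiff.continuous.comp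
      (continuous_id.add ((continuous_const (y := r)).smul hν.continuous)))
  have hLHS : ∫ x, ‖f x - f (x + r • ν' x)‖ ^ 2 =
      (∫⁻ x, (‖f x - f (x + r • ν' x)‖₊ : ℝ≥0∞) ^ 2).toReal := by
    rw [integral_eq_lintegral_of_nonneg_ae
      (Filter.Eventually.of_forall fun x => sq_nonneg _)
      ((hcontdiffr.norm.pow 2).aestronglyMeasurable)]
    congr 1
    apply lintegral_congr
    intro x
    rw [ENNReal.ofReal_pow (norm_nonneg _), ofReal_norm, enorm_eq_nnnorm]
  have hRHS : ∫ x, ‖fderiv ℝ f x‖ ^ 2 = M.toReal := by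
    rw [integral_eq_lintegral_of_nonneg_ae
      (Filter.Eventually.of_forall fun x => sq_nonneg _)
      (((measurable_fderiv ℝ f).norm.pow_const 2).aestronglyMeasurable)]
    congr 1
    apply lintegral_congr
    intro x
    rw [hG, ENNReal.ofReal_pow (norm_nonneg _), ofReal_norm, enorm_eq_nnnorm]
  rw [hLHS, hRHS]
  have hfinR : (ENNReal.ofReal (|r| * Kinf)) ^ 2 * ((ENNReal.ofReal (C ^ n))⁻¹ * M) ≠ ⊤ :=
    ENNReal.mul_ne_top (ENNReal.pow_ne_top ENNReal.ofReal_ne_top)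
      (ENNReal.mul_ne_top (ENNReal.inv_ne_top.mpr hCn0) hMfin)
  have hmono := ENNReal.toReal_mono hfinR hL
  refine le_trans hmono (le_of_eq ?_)
  rw [ENNReal.toReal_mul, ENNReal.toReal_mul, ENNReal.toReal_pow,
    ENNReal.toReal_inv, ENNReal.toReal_ofReal (by positivity : (0:ℝ) ≤ |r| * Kinf),
    ENNReal.toReal_ofReal (by positivity : (0:ℝ) ≤ C ^ n)]
  ring

/-- `L²`-estimate for the normal shift: if `|r|‖ν̃‖_{C¹_b} ≤ 1 − C`, then
`‖f − f_r‖²_{L²} ≤ (|r|²‖ν̃‖²_∞ / Cⁿ)‖∇f‖²_{L²}` for all `f ∈ H¹(ℝⁿ)`. -/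
theorem stmt7 {n : ℕ} (hn : 2 ≤ n) (ν' : Evec n → Evec n) (hν : ContDiff ℝ 1 ν')
    (Kinf Kb C r : ℝ)
    (hinf : ∀ x, ‖ν' x‖ ≤ Kinf)
    (hb : ∀ x, ‖ν' x‖ ≤ Kb ∧ ‖fderiv ℝ ν' x‖ ≤ Kb)
    (hC : C ∈ Set.Ioo (0 : ℝ) 1) (hr : |r| * Kb ≤ 1 - C)
    (f : Evec n → ℂ) (hf : MemH1 f) :
    ∫ x, ‖f x - f (x + r • ν' x)‖ ^ 2 ≤
      (|r| ^ 2 * Kinf ^ 2 / C ^ n) * ∫ x, ‖fderiv ℝ f x‖ ^ 2 :=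
  stmt7' hn ν' hν Kinf Kb C r hinf hb hC hr f hf
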